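/- arXiv:2604.21179 — 5 statements merged into one kernel-verified Lean document; each statement's English description precedes it below -/
import Mathlib

section
/- Contraction of the regularized Bellman operator (Lemma 3.2): For any two bounded measurable functions W₁, W₂ : 𝒳 → ℝ, one has sup_{x ∈ 𝒳} |(T*W₁)(x) − (T*W₂)(x)| ≤ γ · sup_{x ∈ 𝒳} |W₁(x) − W₂(x)|. -/
open MeasureTheory

/-- The discrete-time entropy-regularized Bellman operator
`(T*W)(x) = λh · ln ∫ exp((r(x,u)h + γ ∫ W dκ(x,u)) / (λh)) μ(du)`. -/
noncomputable def Tstar {𝒳 𝒰 : Type*} [MeasurableSpace 𝒳] [MeasurableSpace 𝒰]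
    (μ : Measure 𝒰) (κ : ProbabilityTheory.Kernel (𝒳 × 𝒰) 𝒳) (r : 𝒳 × 𝒰 → ℝ)
    (h lam γ : ℝ) (W : 𝒳 → ℝ) : 𝒳 → ℝ :=
  fun x => lam * h *
    Real.log (∫ u, Real.exp ((r (x, u) * h + γ * ∫ y, W y ∂(κ (x, u))) / (lam * h)) ∂μ)

/-- Pointwise one-sided contraction bound. -/
lemma Tstar_key {𝒳 𝒰 : Type*} [MeasurableSpace 𝒳] [MeasurableSpace 𝒰]
    (μ : Measure 𝒰) [IsFiniteMeasure μ] (hμpos : 0 < μ Set.univ)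
    (κ : ProbabilityTheory.Kernel (𝒳 × 𝒰) 𝒳) [ProbabilityTheory.IsMarkovKernel κ]
    (r : 𝒳 × 𝒰 → ℝ) (hrmeas : Measurable r) {Cr : ℝ} (hCr : ∀ p, |r p| ≤ Cr)
    (h lam γ : ℝ) (hh : 0 < h) (hlam : 0 < lam) (hγ : 0 < γ)
    (V₁ V₂ : 𝒳 → ℝ) (hV₁meas : Measurable V₁) (hV₂meas : Measurable V₂)
    {D : ℝ} (hD₁ : ∀ x, |V₁ x| ≤ D) (hD₂ : ∀ x, |V₂ x| ≤ D)
    {M : ℝ} (hM : ∀ y, V₁ y - V₂ y ≤ M) (x : 𝒳) :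
    Tstar μ κ r h lam γ V₁ x - Tstar μ κ r h lam γ V₂ x ≤ γ * M := by
  have hc : 0 < lam * h := mul_pos hlam hh
  set I₁ : 𝒰 → ℝ := fun u => ∫ y, V₁ y ∂(κ (x, u)) with hI₁
  set I₂ : 𝒰 → ℝ := fun u => ∫ y, V₂ y ∂(κ (x, u)) with hI₂
  have hI₁meas : Measurable I₁ := by
    have : StronglyMeasurable fun p : 𝒳 × 𝒰 => ∫ y, V₁ y ∂(κ p) :=
      (hV₁meas.stronglyMeasurable.comp_measurable
        measurable_snd).integral_kernel_prod_right'
    exact this.measurable.comp measurable_prodMk_left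
  have hI₂meas : Measurable I₂ := by
    have : StronglyMeasurable fun p : 𝒳 × 𝒰 => ∫ y, V₂ y ∂(κ p) :=
      (hV₂meas.stronglyMeasurable.comp_measurable
        measurable_snd).integral_kernel_prod_right'
    exact this.measurable.comp measurable_prodMk_left
  have hI₁bd : ∀ u, |I₁ u| ≤ D := fun u => by
    simpa using norm_integral_le_of_norm_le_const (μ := κ (x, u)) (f := V₁) (C := D)
      (Filter.Eventually.of_forall fun y => hD₁ y)
  have hI₂bd : ∀ u, |I₂ u| ≤ D := fun u => by
    simpa using norm_integral_le_of_norm_le_const (μ := κ (x, u)) (f := V₂) (C := D)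
      (Filter.Eventually.of_forall fun y => hD₂ y)
  -- the exponents
  set f₁ : 𝒰 → ℝ := fun u => (r (x, u) * h + γ * I₁ u) / (lam * h) with hf₁
  set f₂ : 𝒰 → ℝ := fun u => (r (x, u) * h + γ * I₂ u) / (lam * h) with hf₂
  set B : ℝ := (Cr * h + γ * D) / (lam * h) with hB
  have hf₁bd : ∀ u, |f₁ u| ≤ B := by
    intro u
    rw [hf₁, hB, abs_div, abs_of_pos hc]
    refine div_le_div_of_nonneg_right ?_ hc.le |>.trans_eq rfl
    calc |r (x, u) * h + γ * I₁ u| ≤ |r (x, u) * h| + |γ * I₁ u| := abs_add_le _ _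
      _ ≤ Cr * h + γ * D := by
          rw [abs_mul, abs_mul, abs_of_pos hh, abs_of_pos hγ]
          exact add_le_add (mul_le_mul_of_nonneg_right (hCr _) hh.le)
            (mul_le_mul_of_nonneg_left (hI₁bd u) hγ.le)
  have hf₂bd : ∀ u, |f₂ u| ≤ B := by
    intro u
    rw [hf₂, hB, abs_div, abs_of_pos hc]
    refine div_le_div_of_nonneg_right ?_ hc.le |>.trans_eq rfl
    calc |r (x, u) * h + γ * I₂ u| ≤ |r (x, u) * h| + |γ * I₂ u| := abs_add_le _ _
      _ ≤ Cr * h + γ * D := by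
          rw [abs_mul, abs_mul, abs_of_pos hh, abs_of_pos hγ]
          exact add_le_add (mul_le_mul_of_nonneg_right (hCr _) hh.le)
            (mul_le_mul_of_nonneg_left (hI₂bd u) hγ.le)
  have hf₁meas : Measurable f₁ :=
    (((hrmeas.comp measurable_prodMk_left).mul_const h).add
      (hI₁meas.const_mul γ)).div_const _
  have hf₂meas : Measurable f₂ :=
    (((hrmeas.comp measurable_prodMk_left).mul_const h).add
      (hI₂meas.const_mul γ)).div_const _
  have hint₁ : Integrable (fun u => Real.exp (f₁ u)) μ := by
    refine (integrable_const (Real.exp B)).mono'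
      (Real.measurable_exp.comp hf₁meas).aestronglyMeasurable
      (Filter.Eventually.of_forall fun u => ?_)
    rw [Real.norm_eq_abs, abs_of_pos (Real.exp_pos _)]
    exact Real.exp_le_exp.2 ((le_abs_self _).trans (hf₁bd u))
  have hint₂ : Integrable (fun u => Real.exp (f₂ u)) μ := by
    refine (integrable_const (Real.exp B)).mono'
      (Real.measurable_exp.comp hf₂meas).aestronglyMeasurable
      (Filter.Eventually.of_forall fun u => ?_)
    rw [Real.norm_eq_abs, abs_of_pos (Real.exp_pos _)]
    exact Real.exp_le_exp.2 ((le_abs_self _).trans (hf₂bd u))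
  -- positivity of the two integrals
  have hμtr : 0 < (μ Set.univ).toReal :=
    ENNReal.toReal_pos hμpos.ne' (measure_ne_top μ _)
  have hpos : ∀ (f : 𝒰 → ℝ), Integrable (fun u => Real.exp (f u)) μ →
      (∀ u, |f u| ≤ B) → 0 < ∫ u, Real.exp (f u) ∂μ := by
    intro f hint hbd
    have hle : ∀ u, Real.exp (-B) ≤ Real.exp (f u) := fun u =>
      Real.exp_le_exp.2 (neg_le_of_abs_le (hbd u))
    have := integral_mono (integrable_const (Real.exp (-B))) hint hle
    rw [integral_const] at this
    refine lt_of_lt_of_le ?_ this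
    positivity
  have hpos₁ := hpos f₁ hint₁ hf₁bd
  have hpos₂ := hpos f₂ hint₂ hf₂bd
  -- pointwise exponent comparison
  set c : ℝ := γ * M / (lam * h) with hcdef
  have hfle : ∀ u, f₁ u ≤ f₂ u + c := by
    intro u
    have hIle : I₁ u - I₂ u ≤ M := by
      have h1 : I₁ u - I₂ u = ∫ y, (V₁ y - V₂ y) ∂(κ (x, u)) := by
        rw [hI₁, hI₂, integral_sub]
        · exact (integrable_const D).mono' hV₁meas.aestronglyMeasurable
            (Filter.Eventually.of_forall fun y => by
              rw [Real.norm_eq_abs]; exact hD₁ y)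
        · exact (integrable_const D).mono' hV₂meas.aestronglyMeasurable
            (Filter.Eventually.of_forall fun y => by
              rw [Real.norm_eq_abs]; exact hD₂ y)
      rw [h1]
      calc ∫ y, (V₁ y - V₂ y) ∂(κ (x, u)) ≤ ∫ _, M ∂(κ (x, u)) := by
            refine integral_mono ?_ (integrable_const M) hM
            exact ((integrable_const D).mono' hV₁meas.aestronglyMeasurable
              (Filter.Eventually.of_forall fun y => by
                rw [Real.norm_eq_abs]; exact hD₁ y)).sub
              ((integrable_const D).mono' hV₂meas.aestronglyMeasurable
              (Filter.Eventually.of_forall fun y => by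
                rw [Real.norm_eq_abs]; exact hD₂ y))
        _ = M := by simp
    have : f₁ u - f₂ u = γ * (I₁ u - I₂ u) / (lam * h) := by
      rw [hf₁, hf₂]; ring
    have h2 : f₁ u - f₂ u ≤ c := by
      rw [this, hcdef]
      exact div_le_div_of_nonneg_right (mul_le_mul_of_nonneg_left hIle hγ.le) hc.le
    linarith
  -- integral comparison
  have hIntle : ∫ u, Real.exp (f₁ u) ∂μ ≤ Real.exp c * ∫ u, Real.exp (f₂ u) ∂μ := by
    rw [← integral_const_mul]
    refine integral_mono hint₁ (hint₂.const_mul _) fun u => ?_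
    rw [← Real.exp_add]
    exact Real.exp_le_exp.2 (by linarith [hfle u])
  have hlog : Real.log (∫ u, Real.exp (f₁ u) ∂μ)
      ≤ c + Real.log (∫ u, Real.exp (f₂ u) ∂μ) := by
    have := Real.log_le_log hpos₁ hIntle
    rwa [Real.log_mul (Real.exp_pos c).ne' hpos₂.ne', Real.log_exp] at this
  -- conclude
  have hfinal : Tstar μ κ r h lam γ V₁ x - Tstar μ κ r h lam γ V₂ x
      = lam * h * (Real.log (∫ u, Real.exp (f₁ u) ∂μ)
        - Real.log (∫ u, Real.exp (f₂ u) ∂μ)) := by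
    simp only [Tstar, hf₁, hf₂, hI₁, hI₂]; ring
  rw [hfinal]
  have : Real.log (∫ u, Real.exp (f₁ u) ∂μ)
      - Real.log (∫ u, Real.exp (f₂ u) ∂μ) ≤ c := by linarith
  calc lam * h * (Real.log (∫ u, Real.exp (f₁ u) ∂μ)
        - Real.log (∫ u, Real.exp (f₂ u) ∂μ))
      ≤ lam * h * c := by exact mul_le_mul_of_nonneg_left this hc.le
    _ = γ * M := by rw [hcdef]; field_simp

/-- **Contraction of the regularized Bellman operator** (Lemma 3.2):
`sup_x |T*W₁(x) − T*W₂(x)| ≤ γ · sup_x |W₁(x) − W₂(x)|` for bounded measurable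
`W₁, W₂`. -/
theorem Tstar_contraction
    {𝒳 𝒰 : Type*} [MeasurableSpace 𝒳] [MeasurableSpace 𝒰]
    (μ : Measure 𝒰) [IsFiniteMeasure μ] (hμpos : 0 < μ Set.univ)
    (κ : ProbabilityTheory.Kernel (𝒳 × 𝒰) 𝒳) [ProbabilityTheory.IsMarkovKernel κ]
    (r : 𝒳 × 𝒰 → ℝ) (hrmeas : Measurable r) (hrbdd : ∃ C : ℝ, ∀ p, |r p| ≤ C)
    (h lam γ : ℝ) (hh : 0 < h) (hlam : 0 < lam) (hγ : γ ∈ Set.Ioo (0 : ℝ) 1)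
    (W₁ W₂ : 𝒳 → ℝ)
    (hW₁meas : Measurable W₁) (hW₁bdd : ∃ C : ℝ, ∀ x, |W₁ x| ≤ C)
    (hW₂meas : Measurable W₂) (hW₂bdd : ∃ C : ℝ, ∀ x, |W₂ x| ≤ C) :
    ⨆ x, |Tstar μ κ r h lam γ W₁ x - Tstar μ κ r h lam γ W₂ x|
      ≤ γ * ⨆ x, |W₁ x - W₂ x| := by
  obtain ⟨C₁, hC₁⟩ := hW₁bdd
  obtain ⟨C₂, hC₂⟩ := hW₂bdd
  obtain ⟨Cr, hCr⟩ := hrbdd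
  by_cases hne : Nonempty 𝒳
  · set M := ⨆ x, |W₁ x - W₂ x| with hMdef
    have hbdd : BddAbove (Set.range fun x => |W₁ x - W₂ x|) := by
      refine ⟨C₁ + C₂, ?_⟩
      rintro _ ⟨x, rfl⟩
      calc |W₁ x - W₂ x| ≤ |W₁ x| + |W₂ x| := abs_sub _ _
        _ ≤ C₁ + C₂ := add_le_add (hC₁ x) (hC₂ x)
    have hdiff : ∀ y, |W₁ y - W₂ y| ≤ M := fun y => le_ciSup hbdd y
    have hD₁ : ∀ x, |W₁ x| ≤ max C₁ C₂ := fun x => (hC₁ x).trans (le_max_left _ _)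
    have hD₂ : ∀ x, |W₂ x| ≤ max C₁ C₂ := fun x => (hC₂ x).trans (le_max_right _ _)
    refine ciSup_le fun x => ?_
    rw [abs_sub_le_iff]
    constructor
    · exact Tstar_key μ hμpos κ r hrmeas hCr h lam γ hh hlam hγ.1 W₁ W₂
        hW₁meas hW₂meas hD₁ hD₂
        (fun y => (le_abs_self _).trans (hdiff y)) x
    · exact Tstar_key μ hμpos κ r hrmeas hCr h lam γ hh hlam hγ.1 W₂ W₁
        hW₂meas hW₁meas hD₂ hD₁
        (fun y => by
          have h2 := neg_le_of_abs_le (hdiff y)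
          linarith) x
  · rw [not_nonempty_iff] at hne
    simp [ciSup_of_empty, Real.sSup_empty]
end

section
/- Sup-norm bound for the regularized value function (first claim of Lemma 5.3, general-measure form): The unique bounded measurable fixed point V_h of T* satisfies sup_{x ∈ 𝒳} |V_h(x)| ≤ ( h · sup_{x,u} |r(x,u)| + λh · |ln μ(𝒰)| ) / (1 − γ); in particular, if μ(𝒰) = 1 then ‖V_h‖_∞ ≤ h‖r‖_∞/(1 − γ). -/
/-!
If `|f| ≤ B` then `ln ∫ e^f dμ` lies within `B` of `ln μ(𝒰)`. Hence `T*` maps functions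
bounded by `S` to functions bounded by `h‖r‖_∞ + γS + λh|ln μ(𝒰)|`, so the fixed point satisfies
`‖V_h‖_∞ ≤ h‖r‖_∞ + γ‖V_h‖_∞ + λh|ln μ(𝒰)|`, and `γ < 1` lets us solve for `‖V_h‖_∞`.
-/

open MeasureTheory

open Real Set ProbabilityTheory

theorem abs_log_integral_exp_sub_log_measureReal_le {α : Type*} [MeasurableSpace α]
    {μ : Measure α} [IsFiniteMeasure μ] [NeZero μ] {f : α → ℝ} {B : ℝ}
    (hf : AEStronglyMeasurable f μ) (hfB : ∀ a, |f a| ≤ B) :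
    |log (∫ a, exp (f a) ∂μ) - log (μ.real univ)| ≤ B := by
  have hm : 0 < μ.real univ := measureReal_univ_pos
  have hint : Integrable (fun a => exp (f a)) μ :=
    .of_bound (continuous_exp.comp_aestronglyMeasurable hf) (exp B) <| ae_of_all _ fun a => by
      rw [norm_of_nonneg (exp_pos _).le]
      exact exp_le_exp.2 (le_of_abs_le (hfB a))
  have hlower : μ.real univ * exp (-B) ≤ ∫ a, exp (f a) ∂μ := by
    rw [← smul_eq_mul, ← integral_const]
    exact integral_mono (integrable_const _) hint fun a => exp_le_exp.2 (neg_le_of_abs_le (hfB a))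
  have hupper : ∫ a, exp (f a) ∂μ ≤ μ.real univ * exp B := by
    rw [← smul_eq_mul, ← integral_const]
    exact integral_mono hint (integrable_const _) fun a => exp_le_exp.2 (le_of_abs_le (hfB a))
  have hI : 0 < ∫ a, exp (f a) ∂μ := lt_of_lt_of_le (by positivity) hlower
  rw [abs_sub_le_iff]
  constructor
  · have := log_le_log hI hupper
    rw [log_mul hm.ne' (exp_pos _).ne', log_exp] at this
    linarith
  · have := log_le_log (by positivity) hlower
    rw [log_mul hm.ne' (exp_pos _).ne', log_exp] at this
    linarith

theorem abs_Tstar_le {𝒳 𝒰 : Type*} [MeasurableSpace 𝒳] [MeasurableSpace 𝒰]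
    {μ : Measure 𝒰} [IsFiniteMeasure μ] [NeZero μ] {κ : Kernel (𝒳 × 𝒰) 𝒳} [IsMarkovKernel κ]
    {r : 𝒳 × 𝒰 → ℝ} {R : ℝ} (hr : Measurable r) (hrR : ∀ p, |r p| ≤ R)
    {h lam γ : ℝ} (hh : 0 < h) (hlam : 0 < lam) (hγ : 0 ≤ γ)
    {W : 𝒳 → ℝ} {S : ℝ} (hW : Measurable W) (hWS : ∀ y, |W y| ≤ S) (x : 𝒳) :
    |Tstar μ κ r h lam γ W x| ≤ h * R + γ * S + lam * h * |log (μ.real univ)| := by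
  have hlh : 0 < lam * h := mul_pos hlam hh
  set f : 𝒰 → ℝ := fun u => (r (x, u) * h + γ * ∫ y, W y ∂κ (x, u)) / (lam * h)
  have hTf : Tstar μ κ r h lam γ W x = lam * h * log (∫ u, exp (f u) ∂μ) := rfl
  have hf_meas : Measurable f :=
    (((hr.comp measurable_prodMk_left).mul_const h).add
      (((hW.stronglyMeasurable.integral_kernel (κ := κ)).measurable.comp
        measurable_prodMk_left).const_mul γ)).div_const _
  have hfB (u : 𝒰) : |f u| ≤ (h * R + γ * S) / (lam * h) := by
    have hκW : |∫ y, W y ∂κ (x, u)| ≤ S := by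
      simpa using norm_integral_le_of_norm_le_const (μ := κ (x, u))
        (ae_of_all _ fun y => (norm_eq_abs (W y)).trans_le (hWS y))
    rw [abs_div, abs_of_pos hlh]
    gcongr
    calc |r (x, u) * h + γ * ∫ y, W y ∂κ (x, u)|
        ≤ |r (x, u) * h| + |γ * ∫ y, W y ∂κ (x, u)| := abs_add_le _ _
      _ = |r (x, u)| * h + γ * |∫ y, W y ∂κ (x, u)| := by
          rw [abs_mul, abs_mul, abs_of_pos hh, abs_of_nonneg hγ]
      _ ≤ h * R + γ * S := by rw [mul_comm]; gcongr; exact hrR _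
  have hlog :=
    abs_log_integral_exp_sub_log_measureReal_le (μ := μ) hf_meas.aestronglyMeasurable hfB
  calc |Tstar μ κ r h lam γ W x| = lam * h * |log (∫ u, exp (f u) ∂μ)| := by
        rw [hTf, abs_mul, abs_of_pos hlh]
    _ ≤ lam * h * ((h * R + γ * S) / (lam * h) + |log (μ.real univ)|) := by
        gcongr
        exact sub_le_iff_le_add.1 ((abs_sub_abs_le_abs_sub _ _).trans hlog)
    _ = h * R + γ * S + lam * h * |log (μ.real univ)| := by field_simp

theorem le_div_one_sub_of_forall_le_add_mul {ι : Type*} {g : ι → ℝ} {A γ : ℝ} (hγ : γ < 1)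
    (hg : BddAbove (range g)) (hstep : ∀ S, (∀ i, g i ≤ S) → ∀ i, g i ≤ A + γ * S) (i : ι) :
    g i ≤ A / (1 - γ) := by
  have : Nonempty ι := ⟨i⟩
  have hsup (j : ι) : g j ≤ ⨆ k, g k := le_ciSup hg j
  have hsup_le : ⨆ k, g k ≤ A + γ * ⨆ k, g k := ciSup_le (hstep _ hsup)
  rw [le_div_iff₀ (sub_pos.2 hγ)]
  calc g i * (1 - γ) ≤ (⨆ k, g k) * (1 - γ) :=
        mul_le_mul_of_nonneg_right (hsup i) (sub_pos.2 hγ).le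
    _ ≤ A := by linarith

/-- **Sup-norm bound for the regularized value function** (first claim of
Lemma 5.3, general-measure form): the unique bounded measurable fixed point `V_h`
of `T*` satisfies `‖V_h‖_∞ ≤ (h‖r‖_∞ + λh·|ln μ(𝒰)|)/(1 − γ)`; in particular, if
`μ(𝒰) = 1` then `‖V_h‖_∞ ≤ h‖r‖_∞/(1 − γ)`. -/
theorem Vh_sup_norm_bound
    {𝒳 𝒰 : Type*} [MeasurableSpace 𝒳] [MeasurableSpace 𝒰]
    (μ : Measure 𝒰) [IsFiniteMeasure μ] (hμpos : 0 < μ Set.univ)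
    (κ : ProbabilityTheory.Kernel (𝒳 × 𝒰) 𝒳) [ProbabilityTheory.IsMarkovKernel κ]
    (r : 𝒳 × 𝒰 → ℝ) (hrmeas : Measurable r)
    (R : ℝ) (hrbdd : ∀ p, |r p| ≤ R)
    (h lam γ : ℝ) (hh : 0 < h) (hlam : 0 < lam) (hγ : γ ∈ Set.Ioo (0 : ℝ) 1)
    (V : 𝒳 → ℝ) (hVmeas : Measurable V) (hVbdd : ∃ C : ℝ, ∀ x, |V x| ≤ C)
    (hVfix : Tstar μ κ r h lam γ V = V) :
    (∀ x, |V x| ≤ (h * R + lam * h * |Real.log (μ Set.univ).toReal|) / (1 - γ)) ∧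
    (μ Set.univ = 1 → ∀ x, |V x| ≤ h * R / (1 - γ)) := by
  obtain ⟨hγ0, hγ1⟩ := hγ
  obtain ⟨C, hC⟩ := hVbdd
  have : NeZero μ := ⟨Measure.measure_univ_pos.mp hμpos⟩
  have hbound : ∀ x, |V x| ≤ (h * R + lam * h * |log (μ Set.univ).toReal|) / (1 - γ) :=
    le_div_one_sub_of_forall_le_add_mul hγ1 ⟨C, forall_mem_range.2 hC⟩ fun S hS x => by
      rw [← congrFun hVfix x, ← measureReal_def]
      linarith [abs_Tstar_le (μ := μ) (κ := κ) hrmeas hrbdd hh hlam hγ0.le hVmeas hS x]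
  exact ⟨hbound, fun hμ1 x => by simpa [hμ1] using hbound x⟩
end

section
/- Domination of policy operators by the optimal Bellman operator: For every policy π, every bounded measurable W : 𝒳 → ℝ, and every x ∈ 𝒳, (T^π W)(x) ≤ (T*W)(x), where (T*W)(x) := λh · ln ∫_𝒰 exp( (r(x,u)h + γ ∫_𝒳 W(y) κ(x,u)(dy)) / (λh) ) μ(du). -/
open MeasureTheory

/-- A (randomized feedback) policy: a bounded measurable nonnegative function
`π : 𝒳 × 𝒰 → ℝ` with `∫ π(x,·) dμ = 1` for every `x`. -/
def IsPolicy {𝒳 𝒰 : Type*} [MeasurableSpace 𝒳] [MeasurableSpace 𝒰]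
    (μ : Measure 𝒰) (π : 𝒳 × 𝒰 → ℝ) : Prop :=
  Measurable π ∧ (∃ C : ℝ, ∀ p, π p ≤ C) ∧ (∀ p, 0 ≤ π p) ∧
    ∀ x, ∫ u, π (x, u) ∂μ = 1

/-- The policy Bellman operator
`(T^π W)(x) = ∫ [r(x,u)h − λh·ln π(x,u) + γ ∫ W dκ(x,u)] π(x,u) μ(du)`
(with the convention `0·ln 0 = 0`, automatic since `Real.log 0 = 0`). -/
noncomputable def Tpol {𝒳 𝒰 : Type*} [MeasurableSpace 𝒳] [MeasurableSpace 𝒰]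
    (μ : Measure 𝒰) (κ : ProbabilityTheory.Kernel (𝒳 × 𝒰) 𝒳) (r : 𝒳 × 𝒰 → ℝ)
    (h lam γ : ℝ) (π : 𝒳 × 𝒰 → ℝ) (W : 𝒳 → ℝ) : 𝒳 → ℝ :=
  fun x => ∫ u,
    (r (x, u) * h - lam * h * Real.log (π (x, u)) + γ * ∫ y, W y ∂(κ (x, u)))
      * π (x, u) ∂μ


private lemma mul_log_abs_le (t : ℝ) (ht : 0 ≤ t) : |t * Real.log t| ≤ 1 + t ^ 2 := by
  rcases eq_or_lt_of_le ht with h0 | h0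
  · simp [← h0]
  rcases le_or_gt t 1 with h1 | h1
  · have hlt := Real.abs_log_mul_self_lt t h0 h1
    have h2 : |t * Real.log t| = |Real.log t * t| := by ring_nf
    nlinarith [sq_nonneg t]
  · have hlog0 : 0 ≤ Real.log t := Real.log_nonneg h1.le
    have hle : Real.log t ≤ t - 1 := Real.log_le_sub_one_of_pos h0
    rw [abs_of_nonneg (mul_nonneg ht hlog0)]
    nlinarith

/-- **Domination of policy operators by the optimal Bellman operator**: for every
policy `π`, bounded measurable `W` and every `x`, `(T^π W)(x) ≤ (T*W)(x)`. -/
theorem Tpol_le_Tstar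
    {𝒳 𝒰 : Type*} [MeasurableSpace 𝒳] [MeasurableSpace 𝒰]
    (μ : Measure 𝒰) [IsFiniteMeasure μ] (hμpos : 0 < μ Set.univ)
    (κ : ProbabilityTheory.Kernel (𝒳 × 𝒰) 𝒳) [ProbabilityTheory.IsMarkovKernel κ]
    (r : 𝒳 × 𝒰 → ℝ) (hrmeas : Measurable r) (hrbdd : ∃ C : ℝ, ∀ p, |r p| ≤ C)
    (h lam γ : ℝ) (hh : 0 < h) (hlam : 0 < lam) (hγ : γ ∈ Set.Ioo (0 : ℝ) 1)
    (π : 𝒳 × 𝒰 → ℝ) (hπ : IsPolicy μ π)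
    (W : 𝒳 → ℝ) (hWmeas : Measurable W) (hWbdd : ∃ C : ℝ, ∀ x, |W x| ≤ C) :
    ∀ x, Tpol μ κ r h lam γ π W x ≤ Tstar μ κ r h lam γ W x := by
  intro x
  obtain ⟨hπm, ⟨Cπ, hCπ⟩, hπ0, hπint⟩ := hπ
  obtain ⟨Cr, hCr⟩ := hrbdd
  obtain ⟨Cw, hCw⟩ := hWbdd
  have hU : Nonempty 𝒰 := by
    by_contra hne
    rw [not_nonempty_iff] at hne
    rw [Set.univ_eq_empty_iff.mpr hne] at hμpos
    simp at hμpos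
  obtain ⟨u0⟩ := hU
  set c : ℝ := lam * h with hc_def
  have hc : 0 < c := mul_pos hlam hh
  set p : 𝒰 → ℝ := fun u => π (x, u) with hp_def
  set g : 𝒰 → ℝ := fun u => r (x, u) * h + γ * ∫ y, W y ∂(κ (x, u)) with hg_def
  have hp_meas : Measurable p := hπm.comp measurable_prodMk_left
  have hκW_meas : Measurable fun q : 𝒳 × 𝒰 => ∫ y, W y ∂(κ q) :=
    (MeasureTheory.StronglyMeasurable.integral_kernel_prod_right'
      (κ := κ) (f := fun (q : (𝒳 × 𝒰) × 𝒳) => W q.2)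
      (hWmeas.comp measurable_snd).stronglyMeasurable).measurable
  have hg_meas : Measurable g :=
    ((hrmeas.comp measurable_prodMk_left).mul_const h).add
      (measurable_const.mul (hκW_meas.comp measurable_prodMk_left))
  have hCπ0 : 0 ≤ Cπ := le_trans (hπ0 (x, u0)) (hCπ _)
  have hCr0 : 0 ≤ Cr := le_trans (abs_nonneg _) (hCr (x, u0))
  have hCw0 : 0 ≤ Cw := le_trans (abs_nonneg _) (hCw x)
  have hp0 : ∀ u, 0 ≤ p u := fun u => hπ0 (x, u)
  have hpC : ∀ u, p u ≤ Cπ := fun u => hCπ (x, u)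
  -- bound on g
  set Cg : ℝ := Cr * h + γ * Cw with hCg_def
  have hg_bdd : ∀ u, |g u| ≤ Cg := by
    intro u
    have h1 : |r (x, u) * h| ≤ Cr * h := by
      rw [abs_mul, abs_of_pos hh]
      exact mul_le_mul_of_nonneg_right (hCr _) hh.le
    have h2 : |∫ y, W y ∂(κ (x, u))| ≤ Cw := by
      have := norm_integral_le_of_norm_le_const (μ := κ (x, u))
        (C := Cw) (f := W) (Filter.Eventually.of_forall fun y => hCw y)
      simpa [Real.norm_eq_abs] using this
    have h3 : |γ * ∫ y, W y ∂(κ (x, u))| ≤ γ * Cw := by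
      rw [abs_mul, abs_of_pos hγ.1]
      exact mul_le_mul_of_nonneg_left h2 hγ.1.le
    calc |g u| ≤ |r (x, u) * h| + |γ * ∫ y, W y ∂(κ (x, u))| := abs_add_le _ _
      _ ≤ Cr * h + γ * Cw := add_le_add h1 h3
  -- the exponential and its integral
  set E : 𝒰 → ℝ := fun u => Real.exp (g u / c) with hE_def
  have hE_meas : Measurable E := (hg_meas.div_const c).exp
  have hE_pos : ∀ u, 0 < E u := fun u => Real.exp_pos _
  have hE_bdd : ∀ u, |E u| ≤ Real.exp (Cg / c) := by
    intro u
    rw [abs_of_pos (hE_pos u)]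
    exact Real.exp_le_exp.mpr (div_le_div_of_nonneg_right
      (le_trans (le_abs_self _) (hg_bdd u)) hc.le)
  have hE_int : Integrable E μ := by
    refine Integrable.mono' (integrable_const (Real.exp (Cg / c)))
      hE_meas.aestronglyMeasurable ?_
    exact Filter.Eventually.of_forall fun u => by
      simpa [Real.norm_eq_abs] using hE_bdd u
  set I : ℝ := ∫ u, E u ∂μ with hI_def
  have hI : 0 < I := by
    rw [hI_def, integral_pos_iff_support_of_nonneg (fun u => (hE_pos u).le) hE_int]
    have : Function.support E = Set.univ := by
      ext u; simp [Function.support, (hE_pos u).ne']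
    rw [this]
    exact hμpos
  -- integrability of p and of p * log p
  have hp_int : Integrable p μ := by
    refine Integrable.mono' (integrable_const Cπ) hp_meas.aestronglyMeasurable ?_
    exact Filter.Eventually.of_forall fun u => by
      rw [Real.norm_eq_abs, abs_of_nonneg (hp0 u)]; exact hpC u
  have hplogp_int : Integrable (fun u => p u * Real.log (p u)) μ := by
    refine Integrable.mono' (integrable_const (1 + Cπ ^ 2))
      (hp_meas.mul (Real.measurable_log.comp hp_meas)).aestronglyMeasurable ?_
    refine Filter.Eventually.of_forall fun u => ?_
    rw [Real.norm_eq_abs]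
    calc |p u * Real.log (p u)| ≤ 1 + (p u) ^ 2 := mul_log_abs_le _ (hp0 u)
      _ ≤ 1 + Cπ ^ 2 := by nlinarith [hp0 u, hpC u]
  have hgp_int : Integrable (fun u => g u * p u) μ := by
    refine Integrable.mono' (integrable_const (Cg * Cπ))
      (hg_meas.mul hp_meas).aestronglyMeasurable ?_
    refine Filter.Eventually.of_forall fun u => ?_
    rw [Real.norm_eq_abs, abs_mul, abs_of_nonneg (hp0 u)]
    exact mul_le_mul (hg_bdd u) (hpC u) (hp0 u) (le_trans (abs_nonneg _) (hg_bdd u))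
  -- LHS and RHS functions
  set F : 𝒰 → ℝ := fun u => (g u - c * Real.log (p u)) * p u with hF_def
  set G : 𝒰 → ℝ := fun u => c * Real.log I * p u + (c / I) * E u - c * p u with hG_def
  have hF_int : Integrable F μ := by
    have : F = fun u => g u * p u - c * (p u * Real.log (p u)) := by
      funext u; simp only [hF_def]; ring
    rw [this]
    exact hgp_int.sub (hplogp_int.const_mul c)
  have hG_int : Integrable G μ := by
    exact ((hp_int.const_mul _).add (hE_int.const_mul _)).sub (hp_int.const_mul c)
  -- pointwise inequality
  have hFG : ∀ u, F u ≤ G u := by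
    intro u
    rcases eq_or_lt_of_le (hp0 u) with hpu | hpu
    · simp only [hF_def, hG_def, ← hpu]
      have : 0 ≤ c / I * E u := le_of_lt (mul_pos (div_pos hc hI) (hE_pos u))
      simpa using this
    · set t : ℝ := E u / (I * p u) with ht_def
      have ht : 0 < t := div_pos (hE_pos u) (mul_pos hI hpu)
      have h1 : Real.log t ≤ t - 1 := Real.log_le_sub_one_of_pos ht
      have h2 : Real.log t = g u / c - Real.log I - Real.log (p u) := by
        rw [ht_def, Real.log_div (hE_pos u).ne' (mul_pos hI hpu).ne',
          Real.log_mul hI.ne' hpu.ne', hE_def]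
        simp [Real.log_exp]
        ring
      have h3 : g u / c - Real.log I - Real.log (p u) ≤ t - 1 := h2 ▸ h1
      have h4 : g u - c * Real.log (p u) ≤ c * Real.log I + c * t - c := by
        have hgc : c * (g u / c) = g u := mul_div_cancel₀ _ hc.ne'
        have h3' := mul_le_mul_of_nonneg_left h3 hc.le
        rw [mul_sub, mul_sub, mul_sub, hgc, mul_one] at h3'
        linarith
      have h5 : F u ≤ (c * Real.log I + c * t - c) * p u :=
        mul_le_mul_of_nonneg_right h4 (hp0 u)
      have h6 : (c * Real.log I + c * t - c) * p u = G u := by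
        simp only [hG_def, ht_def]
        field_simp
      linarith [h6 ▸ h5]
  -- integrate
  have hint : ∫ u, F u ∂μ ≤ ∫ u, G u ∂μ := integral_mono hF_int hG_int hFG
  have hGval : ∫ u, G u ∂μ = c * Real.log I := by
    simp only [hG_def]
    have i1 : Integrable (fun u => c * Real.log I * p u) μ := hp_int.const_mul _
    have i2 : Integrable (fun u => c / I * E u) μ := hE_int.const_mul _
    have i3 : Integrable (fun u => c * p u) μ := hp_int.const_mul _
    have i12 : Integrable (fun u => c * Real.log I * p u + c / I * E u) μ := i1.add i2
    rw [integral_sub i12 i3, integral_add i1 i2,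
      integral_const_mul, integral_const_mul, integral_const_mul]
    have hpint1 : ∫ u, p u ∂μ = 1 := hπint x
    rw [hpint1, ← hI_def, div_mul_cancel₀ _ hI.ne']
    ring
  have hTpol : Tpol μ κ r h lam γ π W x = ∫ u, F u ∂μ := by
    simp only [Tpol, hF_def, hg_def, hp_def, hc_def]
    congr 1
    funext u
    ring
  have hTstar : Tstar μ κ r h lam γ W x = c * Real.log I := by
    simp only [Tstar, hI_def, hE_def, hg_def, hc_def]
  rw [hTpol, hTstar]
  exact hint.trans_eq hGval
end

section
/- Optimality of the Gibbs policy (second part of Proposition 3.3 and equation (3.4), kernel form): Let V_h be the unique bounded measurable fixed point of T*, and define π*_h(x,u) := exp( (r(x,u)h + γ ∫_𝒳 V_h(y) κ(x,u)(dy)) / (λh) ) / ∫_𝒰 exp( (r(x,u')h + γ ∫_𝒳 V_h(y) κ(x,u')(dy)) / (λh) ) μ(du'). Then π*_h is a (bounded measurable) policy, T^{π*_h} V_h = V_h, and hence V_h is the unique bounded measurable fixed point of T^{π*_h}, i.e. the Gibbs policy π*_h achieves the supremum in the regularized Bellman equation. -/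
open MeasureTheory

/-! With `g = (r h + γ ∫ V dκ) / (λh)` and `Z x = ∫ exp (g (x, ·)) dμ`, the Gibbs density
`π = exp g / Z` satisfies `λh log π = r h + γ ∫ V dκ - λh log Z`, so the integrand of `T^π V`
collapses to `λh log Z · π`, whence `T^π V = T* V = V`. For uniqueness, `T^π` is affine with
linear part `γ` times the Markov averaging `W ↦ ∫∫ W dκ π dμ`, hence a `γ`-contraction in the
sup norm on bounded functions. -/

open ProbabilityTheory

lemma eq_zero_of_bound_contracts {α : Type*} {f : α → ℝ} {q : ℝ} (hq₀ : 0 ≤ q) (hq₁ : q < 1)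
    (hf : ∃ C, ∀ x, |f x| ≤ C) (hcontr : ∀ C, (∀ x, |f x| ≤ C) → ∀ x, |f x| ≤ q * C) :
    f = 0 := by
  obtain ⟨C, hC⟩ := hf
  have hpow : ∀ n : ℕ, ∀ x, |f x| ≤ q ^ n * C := by
    intro n
    induction n with
    | zero => simpa using hC
    | succ n ih => exact fun x => (hcontr _ ih x).trans_eq (by ring)
  funext x
  have hlim : Filter.Tendsto (fun n : ℕ => q ^ n * C) Filter.atTop (nhds 0) := by
    simpa using (tendsto_pow_atTop_nhds_zero_of_lt_one hq₀ hq₁).mul_const C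
  exact abs_nonpos_iff.mp (ge_of_tendsto' hlim fun n => hpow n x)

lemma integrable_of_abs_le {α : Type*} [MeasurableSpace α] {μ : Measure α} [IsFiniteMeasure μ]
    {f : α → ℝ} (hf : Measurable f) {C : ℝ} (hC : ∀ x, |f x| ≤ C) : Integrable f μ :=
  .of_bound hf.aestronglyMeasurable C (ae_of_all _ hC)

lemma abs_integral_le_of_abs_le {α : Type*} [MeasurableSpace α] {ν : Measure α}
    [IsProbabilityMeasure ν] {f : α → ℝ} {C : ℝ} (hC : ∀ x, |f x| ≤ C) : |∫ x, f x ∂ν| ≤ C := by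
  simpa using norm_integral_le_of_norm_le_const (μ := ν) (f := f) (ae_of_all _ hC)

section PolicyOperator

variable {𝒳 𝒰 : Type*} [MeasurableSpace 𝒳] [MeasurableSpace 𝒰]
  {μ : Measure 𝒰} [IsFiniteMeasure μ] {κ : Kernel (𝒳 × 𝒰) 𝒳} [IsMarkovKernel κ]
  {r : 𝒳 × 𝒰 → ℝ} {π : 𝒳 × 𝒰 → ℝ} {h lam γ : ℝ} {W W' : 𝒳 → ℝ}

lemma IsPolicy.integrable (hπ : IsPolicy μ π) (x : 𝒳) : Integrable (fun u => π (x, u)) μ := by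
  obtain ⟨hπm, ⟨C, hC⟩, hπ₀, -⟩ := hπ
  exact integrable_of_abs_le (hπm.comp measurable_prodMk_left) fun u =>
    (abs_of_nonneg (hπ₀ _)).trans_le (hC _)

lemma exists_abs_mul_log_le (C : ℝ) : ∃ B, ∀ t ∈ Set.Icc 0 C, |t * Real.log t| ≤ B :=
  isCompact_Icc.exists_bound_of_continuousOn Real.continuous_mul_log.continuousOn

lemma integrable_Tpol_integrand (hr : Measurable r) (hrb : ∃ C, ∀ p, |r p| ≤ C)
    (hπ : IsPolicy μ π) (hW : Measurable W) (hWb : ∃ C, ∀ y, |W y| ≤ C) (x : 𝒳) :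
    Integrable (fun u =>
      (r (x, u) * h - lam * h * Real.log (π (x, u)) + γ * ∫ y, W y ∂κ (x, u)) * π (x, u)) μ := by
  obtain ⟨hπm, ⟨Cπ, hCπ⟩, hπ₀, -⟩ := hπ
  obtain ⟨Cr, hCr⟩ := hrb
  obtain ⟨CW, hCW⟩ := hWb
  obtain ⟨B, hB⟩ := exists_abs_mul_log_le Cπ
  have hmeas : Measurable fun u =>
      (r (x, u) * h - lam * h * Real.log (π (x, u)) + γ * ∫ y, W y ∂κ (x, u)) * π (x, u) := by
    have hrx : Measurable fun u => r (x, u) := hr.comp measurable_prodMk_left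
    have hπx : Measurable fun u => π (x, u) := hπm.comp measurable_prodMk_left
    have hWx : Measurable fun u => ∫ y, W y ∂κ (x, u) :=
      hW.stronglyMeasurable.integral_kernel.measurable.comp measurable_prodMk_left
    fun_prop
  refine integrable_of_abs_le hmeas (C := (Cr * |h| + |γ| * CW) * Cπ + |lam * h| * B) fun u => ?_
  have hπu : |π (x, u)| ≤ Cπ := (abs_of_nonneg (hπ₀ _)).trans_le (hCπ _)
  have hlog : |π (x, u) * Real.log (π (x, u))| ≤ B := hB _ ⟨hπ₀ _, hCπ _⟩
  have hbase : |r (x, u) * h + γ * ∫ y, W y ∂κ (x, u)| ≤ Cr * |h| + |γ| * CW := by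
    refine (abs_add_le _ _).trans ?_
    rw [abs_mul, abs_mul]
    gcongr
    · exact hCr _
    · exact abs_integral_le_of_abs_le hCW
  calc _ = |(r (x, u) * h + γ * ∫ y, W y ∂κ (x, u)) * π (x, u)
          - lam * h * (π (x, u) * Real.log (π (x, u)))| := by congr 1; ring
    _ ≤ _ := by
      refine (abs_sub _ _).trans ?_
      rw [abs_mul, abs_mul]
      gcongr
      exact (abs_nonneg _).trans hbase

lemma Tpol_sub_Tpol (hr : Measurable r) (hrb : ∃ C, ∀ p, |r p| ≤ C) (hπ : IsPolicy μ π)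
    (hW : Measurable W) (hWb : ∃ C, ∀ y, |W y| ≤ C)
    (hW' : Measurable W') (hW'b : ∃ C, ∀ y, |W' y| ≤ C) (x : 𝒳) :
    Tpol μ κ r h lam γ π W x - Tpol μ κ r h lam γ π W' x =
      γ * ∫ u, (∫ y, (W y - W' y) ∂κ (x, u)) * π (x, u) ∂μ := by
  obtain ⟨CW, hCW⟩ := hWb
  obtain ⟨CW', hCW'⟩ := hW'b
  rw [Tpol, Tpol, ← integral_sub (integrable_Tpol_integrand hr hrb hπ hW ⟨CW, hCW⟩ x)
    (integrable_Tpol_integrand hr hrb hπ hW' ⟨CW', hCW'⟩ x), ← integral_const_mul]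
  congr 1 with u
  rw [integral_sub (integrable_of_abs_le hW hCW) (integrable_of_abs_le hW' hCW')]
  ring

lemma abs_Tpol_sub_Tpol_le (hr : Measurable r) (hrb : ∃ C, ∀ p, |r p| ≤ C) (hπ : IsPolicy μ π)
    (hW : Measurable W) (hWb : ∃ C, ∀ y, |W y| ≤ C)
    (hW' : Measurable W') (hW'b : ∃ C, ∀ y, |W' y| ≤ C)
    {C : ℝ} (hC : ∀ y, |W y - W' y| ≤ C) (x : 𝒳) :
    |Tpol μ κ r h lam γ π W x - Tpol μ κ r h lam γ π W' x| ≤ |γ| * C := by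
  have ⟨_, _, hπ₀, hπ₁⟩ := hπ
  rw [Tpol_sub_Tpol hr hrb hπ hW hWb hW' hW'b, abs_mul]
  gcongr
  calc |∫ u, (∫ y, (W y - W' y) ∂κ (x, u)) * π (x, u) ∂μ|
      ≤ ∫ u, |(∫ y, (W y - W' y) ∂κ (x, u)) * π (x, u)| ∂μ := abs_integral_le_integral_abs
    _ ≤ ∫ u, C * π (x, u) ∂μ := by
      refine integral_mono_of_nonneg (ae_of_all _ fun u => abs_nonneg _)
        ((hπ.integrable x).const_mul C) (ae_of_all _ fun u => ?_)
      dsimp only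
      rw [abs_mul, abs_of_nonneg (hπ₀ _)]
      exact mul_le_mul_of_nonneg_right (abs_integral_le_of_abs_le hC) (hπ₀ _)
    _ = C := by rw [integral_const_mul, hπ₁, mul_one]

theorem Tpol_fixedPoint_unique (hγ : |γ| < 1) (hr : Measurable r) (hrb : ∃ C, ∀ p, |r p| ≤ C)
    (hπ : IsPolicy μ π) (hW : Measurable W) (hWb : ∃ C, ∀ y, |W y| ≤ C)
    (hW' : Measurable W') (hW'b : ∃ C, ∀ y, |W' y| ≤ C)
    (hWfix : Tpol μ κ r h lam γ π W = W) (hW'fix : Tpol μ κ r h lam γ π W' = W') : W = W' := by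
  obtain ⟨CW, hCW⟩ := hWb
  obtain ⟨CW', hCW'⟩ := hW'b
  rw [← sub_eq_zero]
  refine eq_zero_of_bound_contracts (abs_nonneg γ) hγ ⟨CW + CW', fun y => ?_⟩ fun C hC y => ?_
  · exact (abs_sub _ _).trans (add_le_add (hCW y) (hCW' y))
  · rw [Pi.sub_apply, ← hWfix, ← hW'fix]
    exact abs_Tpol_sub_Tpol_le hr hrb hπ hW ⟨CW, hCW⟩ hW' ⟨CW', hCW'⟩ hC y

end PolicyOperator

section Gibbs

variable {𝒳 𝒰 : Type*} [MeasurableSpace 𝒳] [MeasurableSpace 𝒰] {μ : Measure 𝒰}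

noncomputable def gibbsDensity (μ : Measure 𝒰) (g : 𝒳 × 𝒰 → ℝ) : 𝒳 × 𝒰 → ℝ :=
  fun p => Real.exp (g p) / ∫ u, Real.exp (g (p.1, u)) ∂μ

variable [IsFiniteMeasure μ] {g : 𝒳 × 𝒰 → ℝ} {M : ℝ}

lemma integrable_exp_section (hg : Measurable g) (hM : ∀ p, |g p| ≤ M) (x : 𝒳) :
    Integrable (fun u => Real.exp (g (x, u))) μ :=
  integrable_of_abs_le (Real.measurable_exp.comp (hg.comp measurable_prodMk_left)) fun u => by
    rw [abs_of_pos (Real.exp_pos _)]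
    exact Real.exp_le_exp.2 (abs_le.1 (hM _)).2

lemma exp_neg_mul_le_integral_exp (hg : Measurable g) (hM : ∀ p, |g p| ≤ M) (x : 𝒳) :
    Real.exp (-M) * μ.real Set.univ ≤ ∫ u, Real.exp (g (x, u)) ∂μ :=
  calc Real.exp (-M) * μ.real Set.univ = ∫ _, Real.exp (-M) ∂μ := by
        rw [integral_const, smul_eq_mul, mul_comm]
    _ ≤ _ := integral_mono (integrable_const _) (integrable_exp_section hg hM x) fun u =>
        Real.exp_le_exp.2 (neg_le_of_abs_le (hM _))

lemma isPolicy_gibbsDensity [NeZero μ] (hg : Measurable g) (hM : ∀ p, |g p| ≤ M) :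
    IsPolicy μ (gibbsDensity μ g) := by
  have hZ := exp_neg_mul_le_integral_exp (μ := μ) hg hM
  have hZ₀ : 0 < Real.exp (-M) * μ.real Set.univ := mul_pos (Real.exp_pos _) measureReal_univ_pos
  refine ⟨?_, ⟨Real.exp M / (Real.exp (-M) * μ.real Set.univ), fun p => ?_⟩, fun p => ?_,
    fun x => ?_⟩
  · exact (Real.measurable_exp.comp hg).div
      ((Real.measurable_exp.comp hg).stronglyMeasurable.integral_prod_right'.measurable.comp
        measurable_fst)
  · exact div_le_div₀ (Real.exp_pos M).le (Real.exp_le_exp.2 (abs_le.1 (hM p)).2) hZ₀ (hZ p.1)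
  · exact div_nonneg (Real.exp_pos _).le (hZ₀.trans_le (hZ p.1)).le
  · simp only [gibbsDensity]
    rw [integral_div, div_self (hZ₀.trans_le (hZ x)).ne']

lemma log_gibbsDensity [NeZero μ] (hg : Measurable g) (hM : ∀ p, |g p| ≤ M) (p : 𝒳 × 𝒰) :
    Real.log (gibbsDensity μ g p) = g p - Real.log (∫ u, Real.exp (g (p.1, u)) ∂μ) := by
  rw [gibbsDensity.eq_1, Real.log_div (Real.exp_ne_zero _)
    (integral_exp_pos (integrable_exp_section hg hM p.1)).ne', Real.log_exp]

end Gibbs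

section SoftBellman

variable {𝒳 𝒰 : Type*} [MeasurableSpace 𝒳] [MeasurableSpace 𝒰]
  {μ : Measure 𝒰} {κ : Kernel (𝒳 × 𝒰) 𝒳} {r : 𝒳 × 𝒰 → ℝ} {h lam γ : ℝ} {V : 𝒳 → ℝ}

noncomputable def gibbsExponent (κ : Kernel (𝒳 × 𝒰) 𝒳) (r : 𝒳 × 𝒰 → ℝ) (h lam γ : ℝ)
    (V : 𝒳 → ℝ) : 𝒳 × 𝒰 → ℝ :=
  fun p => (r p * h + γ * ∫ y, V y ∂κ p) / (lam * h)

lemma measurable_gibbsExponent (hr : Measurable r) (hV : Measurable V) :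
    Measurable (gibbsExponent κ r h lam γ V) :=
  ((hr.mul_const h).add (hV.stronglyMeasurable.integral_kernel.measurable.const_mul γ)).div_const _

lemma abs_gibbsExponent_le [IsMarkovKernel κ] {Cr CV : ℝ} (hCr : ∀ p, |r p| ≤ Cr)
    (hCV : ∀ y, |V y| ≤ CV) (p : 𝒳 × 𝒰) :
    |gibbsExponent κ r h lam γ V p| ≤ (Cr * |h| + |γ| * CV) / |lam * h| := by
  rw [gibbsExponent, abs_div]
  gcongr
  refine (abs_add_le _ _).trans ?_
  rw [abs_mul, abs_mul]
  gcongr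
  · exact hCr p
  · exact abs_integral_le_of_abs_le hCV

theorem Tpol_gibbsDensity_self [IsFiniteMeasure μ] [NeZero μ] [IsMarkovKernel κ]
    (hlh : lam * h ≠ 0) (hr : Measurable r) (hrb : ∃ C, ∀ p, |r p| ≤ C)
    (hV : Measurable V) (hVb : ∃ C, ∀ y, |V y| ≤ C) :
    Tpol μ κ r h lam γ (gibbsDensity μ (gibbsExponent κ r h lam γ V)) V =
      Tstar μ κ r h lam γ V := by
  obtain ⟨Cr, hCr⟩ := hrb
  obtain ⟨CV, hCV⟩ := hVb
  have hg : Measurable (gibbsExponent κ r h lam γ V) := measurable_gibbsExponent hr hV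
  have hM := abs_gibbsExponent_le (κ := κ) (h := h) (lam := lam) (γ := γ) hCr hCV
  funext x
  set π := gibbsDensity μ (gibbsExponent κ r h lam γ V)
  have hπ : IsPolicy μ π := isPolicy_gibbsDensity hg hM
  set Z := ∫ u, Real.exp (gibbsExponent κ r h lam γ V (x, u)) ∂μ
  have hintegrand : ∀ u,
      (r (x, u) * h - lam * h * Real.log (π (x, u)) + γ * ∫ y, V y ∂κ (x, u)) * π (x, u) =
        lam * h * Real.log Z * π (x, u) := by
    intro u
    rw [log_gibbsDensity hg hM, gibbsExponent, mul_sub, mul_div_cancel₀ _ hlh]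
    ring
  simp only [Tpol, hintegrand, integral_const_mul, hπ.2.2.2 x, mul_one]
  rfl

end SoftBellman

/-- **Optimality of the Gibbs policy** (second part of Proposition 3.3 and
equation (3.4), kernel form): the Gibbs policy `π*_h` built from the fixed point
`V_h` of `T*` is a policy, satisfies `T^{π*_h} V_h = V_h`, and `V_h` is the unique
bounded measurable fixed point of `T^{π*_h}`. -/
theorem gibbs_policy_optimal
    {𝒳 𝒰 : Type*} [MeasurableSpace 𝒳] [MeasurableSpace 𝒰]
    (μ : Measure 𝒰) [IsFiniteMeasure μ] (hμpos : 0 < μ Set.univ)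
    (κ : ProbabilityTheory.Kernel (𝒳 × 𝒰) 𝒳) [ProbabilityTheory.IsMarkovKernel κ]
    (r : 𝒳 × 𝒰 → ℝ) (hrmeas : Measurable r) (hrbdd : ∃ C : ℝ, ∀ p, |r p| ≤ C)
    (h lam γ : ℝ) (hh : 0 < h) (hlam : 0 < lam) (hγ : γ ∈ Set.Ioo (0 : ℝ) 1)
    (Vh : 𝒳 → ℝ) (hVhmeas : Measurable Vh) (hVhbdd : ∃ C : ℝ, ∀ x, |Vh x| ≤ C)
    (hVhfix : Tstar μ κ r h lam γ Vh = Vh)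
    (πstar : 𝒳 × 𝒰 → ℝ)
    (hπstar : πstar = fun p =>
      Real.exp ((r p * h + γ * ∫ y, Vh y ∂(κ p)) / (lam * h)) /
        ∫ u', Real.exp ((r (p.1, u') * h + γ * ∫ y, Vh y ∂(κ (p.1, u'))) / (lam * h)) ∂μ) :
    IsPolicy μ πstar ∧
    Tpol μ κ r h lam γ πstar Vh = Vh ∧
    ∀ W : 𝒳 → ℝ, Measurable W → (∃ C : ℝ, ∀ x, |W x| ≤ C) →
      Tpol μ κ r h lam γ πstar W = W → W = Vh := by
  have : NeZero μ := ⟨Measure.measure_univ_pos.mp hμpos⟩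
  obtain rfl : πstar = gibbsDensity μ (gibbsExponent κ r h lam γ Vh) := hπstar
  obtain ⟨Cr, hCr⟩ := hrbdd
  obtain ⟨CV, hCV⟩ := hVhbdd
  have hpolicy : IsPolicy μ (gibbsDensity μ (gibbsExponent κ r h lam γ Vh)) :=
    isPolicy_gibbsDensity (measurable_gibbsExponent hrmeas hVhmeas) (abs_gibbsExponent_le hCr hCV)
  have hfix : Tpol μ κ r h lam γ (gibbsDensity μ (gibbsExponent κ r h lam γ Vh)) Vh = Vh :=
    (Tpol_gibbsDensity_self (mul_pos hlam hh).ne' hrmeas ⟨Cr, hCr⟩ hVhmeas ⟨CV, hCV⟩).trans hVhfix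
  have hγ_abs : |γ| < 1 := abs_lt.2 ⟨by linarith [hγ.1], hγ.2⟩
  exact ⟨hpolicy, hfix, fun W hW hWb hWfix =>
    Tpol_fixedPoint_unique hγ_abs hrmeas ⟨Cr, hCr⟩ hpolicy hW hWb hVhmeas ⟨CV, hCV⟩ hWfix hfix⟩
end

section
/- Explicit solution of a one-dimensional first-order HJB equation (Appendix A, equation (A.2)): Fix β > 0, γ ∈ ℝ, an integer n ≥ 2, and h ∈ (0,1). Define r^h(x,u) := β(γx + h^n sin(2πx/h)) − γu − 2π h^{n−1} |cos(2πx/h)| and v^h(x) := γx + h^n sin(2πx/h). Then v^h is differentiable on ℝ with (v^h)'(x) = γ + 2π h^{n−1} cos(2πx/h), and for every x ∈ ℝ, −β v^h(x) + sup_{u ∈ [−1,1]} ( r^h(x,u) + u · (v^h)'(x) ) = 0, i.e. v^h solves the stationary Hamilton–Jacobi–Bellman equation −β v + sup_{u ∈ [−1,1]} [ r^h(x,u) + u v_x ] = 0. -/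
open Real

/-- The reward `r^h(x,u) = β(γx + hⁿ sin(2πx/h)) − γu − 2π h^{n−1} |cos(2πx/h)|`. -/
noncomputable def rewardH (β γ : ℝ) (n : ℕ) (h : ℝ) (x u : ℝ) : ℝ :=
  β * (γ * x + h ^ n * Real.sin (2 * Real.pi * x / h)) - γ * u
    - 2 * Real.pi * h ^ (n - 1) * |Real.cos (2 * Real.pi * x / h)|

/-- The candidate value function `v^h(x) = γx + hⁿ sin(2πx/h)`. -/
noncomputable def valueH (γ : ℝ) (n : ℕ) (h : ℝ) (x : ℝ) : ℝ :=
  γ * x + h ^ n * Real.sin (2 * Real.pi * x / h)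

/-- **Explicit solution of a one-dimensional first-order HJB equation**
(Appendix A, equation (A.2)): `v^h` is differentiable with
`(v^h)'(x) = γ + 2π h^{n−1} cos(2πx/h)`, and for every `x`,
`−β v^h(x) + sup_{u ∈ [−1,1]} (r^h(x,u) + u (v^h)'(x)) = 0`. -/
theorem oneD_HJB_explicit_solution
    (β γ : ℝ) (hβ : 0 < β) (n : ℕ) (hn : 2 ≤ n) (h : ℝ) (hh : h ∈ Set.Ioo (0 : ℝ) 1) :
    (∀ x : ℝ, HasDerivAt (valueH γ n h)
      (γ + 2 * Real.pi * h ^ (n - 1) * Real.cos (2 * Real.pi * x / h)) x) ∧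
    (∀ x : ℝ,
      -β * valueH γ n h x +
        sSup ((fun u => rewardH β γ n h x u + u * deriv (valueH γ n h) x) ''
          Set.Icc (-1 : ℝ) 1) = 0) := by
  have hne : h ≠ 0 := ne_of_gt hh.1
  have hpow : h ^ n * (2 * Real.pi / h) = 2 * Real.pi * h ^ (n - 1) := by
    have : h ^ n = h ^ (n - 1) * h := by
      rw [← pow_succ]
      congr 1
      omega
    rw [this]
    field_simp
  have hderiv : ∀ x : ℝ, HasDerivAt (valueH γ n h)
      (γ + 2 * Real.pi * h ^ (n - 1) * Real.cos (2 * Real.pi * x / h)) x := by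
    intro x
    have h1 : HasDerivAt (fun x : ℝ => 2 * Real.pi * x / h) (2 * Real.pi / h) x := by
      simpa using ((hasDerivAt_id x).const_mul (2 * Real.pi)).div_const h
    have h2 : HasDerivAt (fun x : ℝ => Real.sin (2 * Real.pi * x / h))
        (Real.cos (2 * Real.pi * x / h) * (2 * Real.pi / h)) x :=
      (Real.hasDerivAt_sin _).comp x h1
    have h3 : HasDerivAt (fun x : ℝ => γ * x + h ^ n * Real.sin (2 * Real.pi * x / h))
        (γ * 1 + h ^ n * (Real.cos (2 * Real.pi * x / h) * (2 * Real.pi / h))) x :=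
      ((hasDerivAt_id x).const_mul γ).add (h2.const_mul (h ^ n))
    have : γ * 1 + h ^ n * (Real.cos (2 * Real.pi * x / h) * (2 * Real.pi / h))
        = γ + 2 * Real.pi * h ^ (n - 1) * Real.cos (2 * Real.pi * x / h) := by
      rw [mul_one]
      rw [show h ^ n * (Real.cos (2 * Real.pi * x / h) * (2 * Real.pi / h))
          = h ^ n * (2 * Real.pi / h) * Real.cos (2 * Real.pi * x / h) by ring, hpow]
    exact this ▸ h3
  refine ⟨hderiv, fun x => ?_⟩
  have hd : deriv (valueH γ n h) x
      = γ + 2 * Real.pi * h ^ (n - 1) * Real.cos (2 * Real.pi * x / h) :=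
    (hderiv x).deriv
  set c := Real.cos (2 * Real.pi * x / h) with hc
  set B := 2 * Real.pi * h ^ (n - 1) with hB
  have hBnn : 0 ≤ B := mul_nonneg (by positivity) (pow_nonneg hh.1.le _)
  have key : ∀ u : ℝ, rewardH β γ n h x u + u * deriv (valueH γ n h) x
      = β * valueH γ n h x - B * |c| + u * (B * c) := by
    intro u
    rw [hd]
    simp only [rewardH, valueH]
    ring
  have habs : |B * c| = B * |c| := by
    rw [abs_mul, abs_of_nonneg hBnn]
  have hsup : sSup ((fun u => rewardH β γ n h x u + u * deriv (valueH γ n h) x) ''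
      Set.Icc (-1 : ℝ) 1) = β * valueH γ n h x := by
    apply IsGreatest.csSup_eq
    constructor
    · refine ⟨if 0 ≤ c then 1 else -1, ?_, ?_⟩
      · by_cases hc0 : 0 ≤ c <;> simp [hc0]
      · simp only; rw [key]
        by_cases hc0 : 0 ≤ c
        · simp only [hc0, if_true, one_mul]
          rw [abs_of_nonneg hc0]; ring
        · simp only [hc0, if_false]
          rw [abs_of_neg (lt_of_not_ge hc0)]; ring
    · rintro y ⟨u, hu, rfl⟩
      simp only; rw [key]
      have : u * (B * c) ≤ B * |c| := by
        calc u * (B * c) ≤ |u * (B * c)| := le_abs_self _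
        _ = |u| * (B * |c|) := by rw [abs_mul, habs]
        _ ≤ 1 * (B * |c|) := by
            apply mul_le_mul_of_nonneg_right _ (by positivity)
            rw [abs_le]; exact hu
        _ = B * |c| := one_mul _
      linarith
  rw [hsup]; ring
end
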